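/- Refraction by a decreasing potential: set T_ε := ε^(-1-1/100)/v₀, A₀ := a(-ε·v₀·T_ε), c₀ := 1 - v₀²/(4·λ₀), and c_∞ := (a₀/A₀)^(4/(5-m)). Assume c₀ < c_∞. Then the system V' = ε·8·a'(ε·U)·C/((m+3)·a(ε·U)), C' = ε·4·a'(ε·U)·C·V/((5-m)·a(ε·U)), U' = V, with initial data V(-T_ε) = v₀, C(-T_ε) = 1, U(-T_ε) = -v₀·T_ε, has a unique global C¹ solution on [-T_ε, ∞); moreover V(t) > 0 for all t ≥ -T_ε, U(t) → +∞, C(t) → c_∞, and V(t) → (4·λ₀·(c_∞ - c₀))^(1/2) > 0 as t → +∞. -/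

import Mathlib

/-!
Along any solution of the modulation system two quantities are conserved:
`C / a(εU)^p` with `p = 4/(5-m)`, and the energy `V² - 4λ₀C`. Hence
`C = (a(εU)/A₀)^p` and `V² = 4λ₀ (C - c₀)`. As `a > a₀`, the refraction condition
`c₀ < c_∞` keeps the right-hand side above `4λ₀ (c_∞ - c₀) > 0`, so `V` never vanishes and
stays positive: `V = F(U)` with `F = √(4λ₀ (C(U) - c₀))`. The system thus reduces to the
autonomous equation `U' = F(U)`, where `F` is continuous and pinched between positive constants;
separation of variables, `∫_{U(-T_ε)}^{U(t)} ds / F(s) = t + T_ε`, gives a global solution and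
its uniqueness. The limits follow from `a(εU) → a₀` as `U → ∞`.
-/

open Real Set Filter

/-- `(V, C, U)` is a C¹ solution on `[-Tε, ∞)` of the modulation system
`V' = ε·8 a'(εU) C/((m+3) a(εU))`, `C' = ε·4 a'(εU) C V/((5-m) a(εU))`, `U' = V`,
with data `V(-Tε) = v₀`, `C(-Tε) = 1`, `U(-Tε) = -v₀ Tε`. -/
def IsModSol (m v₀ ε Tε : ℝ) (a : ℝ → ℝ) (V C U : ℝ → ℝ) : Prop :=
  ContDiffOn ℝ 1 V (Ici (-Tε)) ∧ ContDiffOn ℝ 1 C (Ici (-Tε)) ∧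
  ContDiffOn ℝ 1 U (Ici (-Tε)) ∧
  (∀ t ∈ Ici (-Tε), HasDerivWithinAt V
      (ε * (8 * deriv a (ε * U t) * C t / ((m + 3) * a (ε * U t)))) (Ici (-Tε)) t) ∧
  (∀ t ∈ Ici (-Tε), HasDerivWithinAt C
      (ε * (4 * deriv a (ε * U t) * C t * V t / ((5 - m) * a (ε * U t)))) (Ici (-Tε)) t) ∧
  (∀ t ∈ Ici (-Tε), HasDerivWithinAt U (V t) (Ici (-Tε)) t) ∧
  V (-Tε) = v₀ ∧ C (-Tε) = 1 ∧ U (-Tε) = -(v₀ * Tε)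

lemma eq_of_hasDerivWithinAt_zero_Ici {f : ℝ → ℝ} {t₀ : ℝ}
    (hf : ∀ t ∈ Ici t₀, HasDerivWithinAt f 0 (Ici t₀) t) : ∀ t ∈ Ici t₀, f t = f t₀ :=
  fun t ht => constant_of_has_deriv_right_zero
    (fun x hx => (hf x hx.1).continuousWithinAt.mono Icc_subset_Ici_self)
    (fun x hx => (hf x hx.1).mono (Ici_subset_Ici.2 hx.1)) t ⟨ht, le_rfl⟩

lemma pos_of_ne_zero_of_continuousOn_Ici {f : ℝ → ℝ} {t₀ : ℝ} (hf : ContinuousOn f (Ici t₀))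
    (h₀ : 0 < f t₀) (hne : ∀ t ∈ Ici t₀, f t ≠ 0) : ∀ t ∈ Ici t₀, 0 < f t := by
  intro t ht
  by_contra! hle
  obtain ⟨c, hc, hc0⟩ := intermediate_value_Icc' ht (hf.mono Icc_subset_Ici_self) ⟨hle, h₀.le⟩
  exact hne c hc.1 hc0

section Autonomous

variable {F : ℝ → ℝ}

noncomputable def travelTime (F : ℝ → ℝ) (u₀ u : ℝ) : ℝ := ∫ s in u₀..u, (F s)⁻¹

@[simp]
lemma travelTime_self (F : ℝ → ℝ) (u : ℝ) : travelTime F u u = 0 :=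
  intervalIntegral.integral_same

lemma hasDerivAt_travelTime (hF : Continuous F) (hF0 : ∀ u, F u ≠ 0) (u₀ u : ℝ) :
    HasDerivAt (travelTime F u₀) (F u)⁻¹ u :=
  have hinv : Continuous fun u => (F u)⁻¹ := hF.inv₀ hF0
  intervalIntegral.integral_hasDerivAt_right (hinv.intervalIntegrable _ _)
    (hinv.stronglyMeasurableAtFilter _ _) hinv.continuousAt

lemma strictMono_travelTime (hF : Continuous F) (hpos : ∀ u, 0 < F u) (u₀ : ℝ) :
    StrictMono (travelTime F u₀) :=
  strictMono_of_hasDerivAt_pos (hasDerivAt_travelTime hF (fun u => (hpos u).ne') u₀)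
    fun u => inv_pos.2 (hpos u)

lemma surjective_travelTime (hF : Continuous F) (hpos : ∀ u, 0 < F u) {M : ℝ}
    (hM : ∀ u, F u ≤ M) (u₀ : ℝ) : Function.Surjective (travelTime F u₀) := by
  have hF' := hasDerivAt_travelTime hF (fun u => (hpos u).ne') u₀
  have hMpos : 0 < M := (hpos 0).trans_le (hM 0)
  have hmono : Monotone fun u => travelTime F u₀ u - u / M :=
    monotone_of_hasDerivAt_nonneg (fun u => (hF' u).sub ((hasDerivAt_id u).div_const M))
      fun u => by simpa [sub_nonneg] using inv_anti₀ (hpos u) (hM u)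
  have hlin_top : Tendsto (fun u => u / M + travelTime F u₀ 0) atTop atTop :=
    tendsto_atTop_add_const_right _ _ (tendsto_id.atTop_div_const hMpos)
  have hlin_bot : Tendsto (fun u => u / M + travelTime F u₀ 0) atBot atBot :=
    tendsto_atBot_add_const_right _ _ (tendsto_id.atBot_div_const hMpos)
  refine (continuous_iff_continuousAt.2 fun u => (hF' u).continuousAt).surjective ?_ ?_
  · refine tendsto_atTop_mono' _ ?_ hlin_top
    filter_upwards [eventually_ge_atTop 0] with u hu
    have := hmono hu
    simp only [zero_div, sub_zero] at this
    linarith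
  · refine tendsto_atBot_mono' _ ?_ hlin_bot
    filter_upwards [eventually_le_atBot 0] with u hu
    have := hmono hu
    simp only [zero_div, sub_zero] at this
    linarith

theorem exists_hasDerivAt_autonomous (hF : Continuous F) (hpos : ∀ u, 0 < F u) {M : ℝ}
    (hM : ∀ u, F u ≤ M) (t₀ u₀ : ℝ) :
    ∃ U : ℝ → ℝ, U t₀ = u₀ ∧ (∀ t, HasDerivAt U (F (U t)) t) ∧ Tendsto U atTop atTop := by
  let e : ℝ ≃o ℝ := (strictMono_travelTime hF hpos u₀).orderIsoOfSurjective _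
    (surjective_travelTime hF hpos hM u₀)
  have he : ∀ u, e u = travelTime F u₀ u := fun _ => rfl
  refine ⟨fun t => e.symm (t - t₀), ?_, fun t => ?_, ?_⟩
  · show e.symm (t₀ - t₀) = u₀
    rw [sub_self, OrderIso.symm_apply_eq, he, travelTime_self]
  · have hinv : ∀ y, travelTime F u₀ (e.symm (y - t₀)) + t₀ = y := fun y => by
      rw [← he, e.apply_symm_apply, sub_add_cancel]
    have h := HasDerivAt.of_local_left_inverse
      (a := t) (e.symm.continuous.comp (continuous_sub_right t₀)).continuousAt
      ((hasDerivAt_travelTime hF (fun u => (hpos u).ne') u₀ _).add_const t₀)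
      (inv_ne_zero (hpos _).ne') (Eventually.of_forall hinv)
    rwa [inv_inv] at h
  · exact e.symm.tendsto_atTop.comp (tendsto_atTop_add_const_right _ _ tendsto_id)

lemma travelTime_eq_of_hasDerivWithinAt (hF : Continuous F) (hF0 : ∀ u, F u ≠ 0)
    {U : ℝ → ℝ} {t₀ : ℝ} (hU : ∀ t ∈ Ici t₀, HasDerivWithinAt U (F (U t)) (Ici t₀) t) :
    ∀ t ∈ Ici t₀, travelTime F (U t₀) (U t) = t - t₀ := by
  have hd : ∀ t ∈ Ici t₀,
      HasDerivWithinAt (fun t => travelTime F (U t₀) (U t) - t) 0 (Ici t₀) t := fun t ht => by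
    have h := ((hasDerivAt_travelTime hF hF0 (U t₀) _).comp_hasDerivWithinAt t (hU t ht)).sub
      (hasDerivWithinAt_id t _)
    rwa [inv_mul_cancel₀ (hF0 _), sub_self] at h
  intro t ht
  have := eq_of_hasDerivWithinAt_zero_Ici hd t ht
  rw [travelTime_self, zero_sub] at this
  linarith

theorem eqOn_Ici_of_autonomous (hF : Continuous F) (hpos : ∀ u, 0 < F u) {U₁ U₂ : ℝ → ℝ}
    {t₀ : ℝ} (h₁ : ∀ t ∈ Ici t₀, HasDerivWithinAt U₁ (F (U₁ t)) (Ici t₀) t)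
    (h₂ : ∀ t ∈ Ici t₀, HasDerivWithinAt U₂ (F (U₂ t)) (Ici t₀) t) (h₀ : U₁ t₀ = U₂ t₀) :
    EqOn U₁ U₂ (Ici t₀) := fun t ht => by
  have hF0 : ∀ u, F u ≠ 0 := fun u => (hpos u).ne'
  refine (strictMono_travelTime hF hpos (U₁ t₀)).injective ?_
  rw [travelTime_eq_of_hasDerivWithinAt hF hF0 h₁ t ht, h₀,
    travelTime_eq_of_hasDerivWithinAt hF hF0 h₂ t ht]

end Autonomous

section Modulation

variable {m v₀ ε Tε A₀ c₀ : ℝ} {a : ℝ → ℝ}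

/-- Along a solution, `C = modProfile (U)` and `V = modSpeed (U)`, where `A₀ = a(ε U(-T_ε))`. -/
noncomputable def modProfile (m ε A₀ : ℝ) (a : ℝ → ℝ) (u : ℝ) : ℝ :=
  (a (ε * u) / A₀) ^ ((4 : ℝ) / (5 - m))

noncomputable def modSpeed (m ε A₀ c₀ : ℝ) (a : ℝ → ℝ) (u : ℝ) : ℝ :=
  √(4 * ((5 - m) / (m + 3)) * (modProfile m ε A₀ a u - c₀))

lemma modProfile_pos (hapos : ∀ r, 0 < a r) (hA₀ : 0 < A₀) (u : ℝ) :
    0 < modProfile m ε A₀ a u :=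
  rpow_pos_of_pos (div_pos (hapos _) hA₀) _

lemma modProfile_eq_one {u : ℝ} (hA₀ : a (ε * u) = A₀) (hA₀ne : A₀ ≠ 0) :
    modProfile m ε A₀ a u = 1 := by
  rw [modProfile, hA₀, div_self hA₀ne, one_rpow]

lemma hasDerivAt_modProfile (ha : Differentiable ℝ a) (hapos : ∀ r, 0 < a r) (hA₀ : 0 < A₀)
    (u : ℝ) : HasDerivAt (modProfile m ε A₀ a)
      (ε * (4 * deriv a (ε * u) * modProfile m ε A₀ a u / ((5 - m) * a (ε * u)))) u := by
  have hbase : a (ε * u) / A₀ ≠ 0 := (div_pos (hapos _) hA₀).ne'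
  have h := (((ha (ε * u)).hasDerivAt.comp u ((hasDerivAt_id u).const_mul ε)).div_const
    A₀).rpow_const (p := 4 / (5 - m)) (Or.inl hbase)
  refine h.congr_deriv ?_
  rw [Function.comp_apply, rpow_sub_one hbase, modProfile]
  field_simp [(hapos (ε * u)).ne']

lemma contDiff_modProfile (ha : ContDiff ℝ 1 a) (hapos : ∀ r, 0 < a r) (hA₀ : 0 < A₀) :
    ContDiff ℝ 1 (modProfile m ε A₀ a) :=
  ((ha.comp (contDiff_const.mul contDiff_id)).div_const A₀).rpow_const_of_ne
    fun _ => (div_pos (hapos _) hA₀).ne'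

lemma five_sub_div_add_three_pos (hm3 : -3 < m) (hm5 : m < 5) : 0 < (5 - m) / (m + 3) :=
  div_pos (by linarith) (by linarith)

lemma modSpeed_radicand_pos (hm3 : -3 < m) (hm5 : m < 5)
    (hrad : ∀ u, c₀ < modProfile m ε A₀ a u) (u : ℝ) :
    0 < 4 * ((5 - m) / (m + 3)) * (modProfile m ε A₀ a u - c₀) :=
  mul_pos (by linarith [five_sub_div_add_three_pos hm3 hm5]) (sub_pos.2 (hrad u))

lemma modSpeed_pos (hm3 : -3 < m) (hm5 : m < 5) (hrad : ∀ u, c₀ < modProfile m ε A₀ a u)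
    (u : ℝ) : 0 < modSpeed m ε A₀ c₀ a u :=
  sqrt_pos.2 (modSpeed_radicand_pos hm3 hm5 hrad u)

lemma hasDerivAt_modSpeed (ha : Differentiable ℝ a) (hapos : ∀ r, 0 < a r) (hA₀ : 0 < A₀)
    (hm3 : -3 < m) (hm5 : m < 5) (hrad : ∀ u, c₀ < modProfile m ε A₀ a u) (u : ℝ) :
    HasDerivAt (modSpeed m ε A₀ c₀ a)
      (ε * (8 * deriv a (ε * u) * modProfile m ε A₀ a u / ((m + 3) * a (ε * u)))
        / modSpeed m ε A₀ c₀ a u) u := by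
  have h := (((hasDerivAt_modProfile ha hapos hA₀ u).sub_const c₀).const_mul
    (4 * ((5 - m) / (m + 3)))).sqrt (modSpeed_radicand_pos hm3 hm5 hrad u).ne'
  refine h.congr_deriv ?_
  rw [← modSpeed]
  have : 5 - m ≠ 0 := by linarith
  have : m + 3 ≠ 0 := by linarith
  field_simp
  ring

lemma contDiff_modSpeed (ha : ContDiff ℝ 1 a) (hapos : ∀ r, 0 < a r) (hA₀ : 0 < A₀)
    (hm3 : -3 < m) (hm5 : m < 5) (hrad : ∀ u, c₀ < modProfile m ε A₀ a u) :
    ContDiff ℝ 1 (modSpeed m ε A₀ c₀ a) :=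
  (contDiff_const.mul ((contDiff_modProfile ha hapos hA₀).sub contDiff_const)).sqrt
    fun u => (modSpeed_radicand_pos hm3 hm5 hrad u).ne'

lemma lt_modProfile {a₀ : ℝ} (ha₀ : 0 ≤ a₀) (haLB : ∀ r, a₀ < a r) (hA₀ : 0 < A₀)
    (hm5 : m < 5) (u : ℝ) : (a₀ / A₀) ^ ((4 : ℝ) / (5 - m)) < modProfile m ε A₀ a u :=
  rpow_lt_rpow (div_nonneg ha₀ hA₀.le) (div_lt_div_of_pos_right (haLB _) hA₀)
    (div_pos four_pos (by linarith))

lemma modSpeed_le (hapos : ∀ r, 0 < a r) (haUB : ∀ r, a r < 1) (hA₀ : 0 < A₀)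
    (hm3 : -3 < m) (hm5 : m < 5) (u : ℝ) :
    modSpeed m ε A₀ c₀ a u ≤ √(4 * ((5 - m) / (m + 3)) * ((1 / A₀) ^ ((4 : ℝ) / (5 - m)) - c₀)) :=
  sqrt_le_sqrt <| mul_le_mul_of_nonneg_left (sub_le_sub_right (rpow_le_rpow
    (div_pos (hapos _) hA₀).le (div_le_div_of_nonneg_right (haUB _).le hA₀.le)
    (div_pos four_pos (by linarith)).le) _) (by linarith [five_sub_div_add_three_pos hm3 hm5])

lemma tendsto_modProfile_atTop {a₀ : ℝ} (hlim : Tendsto a atTop (nhds a₀)) (hε : 0 < ε)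
    (hm5 : m < 5) :
    Tendsto (modProfile m ε A₀ a) atTop (nhds ((a₀ / A₀) ^ ((4 : ℝ) / (5 - m)))) :=
  ((hlim.comp (tendsto_id.const_mul_atTop hε)).div_const A₀).rpow_const
    (Or.inr (div_nonneg zero_le_four (by linarith)))

lemma tendsto_modSpeed_atTop {a₀ : ℝ} (hlim : Tendsto a atTop (nhds a₀)) (hε : 0 < ε)
    (hm5 : m < 5) : Tendsto (modSpeed m ε A₀ c₀ a) atTop
      (nhds √(4 * ((5 - m) / (m + 3)) * ((a₀ / A₀) ^ ((4 : ℝ) / (5 - m)) - c₀))) :=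
  (((tendsto_modProfile_atTop hlim hε hm5).sub_const c₀).const_mul _).sqrt

theorem isModSol_of_hasDerivAt (ha : ContDiff ℝ 1 a) (hapos : ∀ r, 0 < a r)
    (hm3 : -3 < m) (hm5 : m < 5) (hv₀ : 0 < v₀) (hA₀ : a (ε * -(v₀ * Tε)) = A₀)
    (hc₀ : c₀ = 1 - v₀ ^ 2 / (4 * ((5 - m) / (m + 3))))
    (hrad : ∀ u, c₀ < modProfile m ε A₀ a u) {U : ℝ → ℝ}
    (hU : ∀ t, HasDerivAt U (modSpeed m ε A₀ c₀ a (U t)) t) (hU₀ : U (-Tε) = -(v₀ * Tε)) :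
    IsModSol m v₀ ε Tε a (fun t => modSpeed m ε A₀ c₀ a (U t))
      (fun t => modProfile m ε A₀ a (U t)) U := by
  have hA₀pos : 0 < A₀ := hA₀ ▸ hapos _
  have hd := ha.differentiable one_ne_zero
  have hS := contDiff_modSpeed ha hapos hA₀pos hm3 hm5 hrad
  have hUc : ContDiff ℝ 1 U := by
    rw [contDiff_one_iff_deriv, show deriv U = fun t => modSpeed m ε A₀ c₀ a (U t) from
      funext fun t => (hU t).deriv]
    exact ⟨fun t => (hU t).differentiableAt,
      hS.continuous.comp (continuous_iff_continuousAt.2 fun t => (hU t).continuousAt)⟩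
  have hP₀ := modProfile_eq_one (m := m) hA₀ hA₀pos.ne'
  refine ⟨(hS.comp hUc).contDiffOn, ((contDiff_modProfile ha hapos hA₀pos).comp hUc).contDiffOn,
    hUc.contDiffOn, fun t _ => ?_, fun t _ => ?_, fun t _ => (hU t).hasDerivWithinAt, ?_, ?_, hU₀⟩
  · refine ((hasDerivAt_modSpeed hd hapos hA₀pos hm3 hm5 hrad _).comp t
      (hU t)).hasDerivWithinAt.congr_deriv ?_
    field_simp [(modSpeed_pos hm3 hm5 hrad (U t)).ne']
  · refine ((hasDerivAt_modProfile hd hapos hA₀pos _).comp t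
      (hU t)).hasDerivWithinAt.congr_deriv ?_
    ring
  · show modSpeed m ε A₀ c₀ a (U (-Tε)) = v₀
    rw [hU₀, modSpeed, hP₀, hc₀, sub_sub_cancel,
      mul_div_cancel₀ _ (by linarith [five_sub_div_add_three_pos hm3 hm5]), sqrt_sq hv₀.le]
  · show modProfile m ε A₀ a (U (-Tε)) = 1
    rw [hU₀, hP₀]

namespace IsModSol

variable {V C U V₁ C₁ U₁ V₂ C₂ U₂ : ℝ → ℝ}

lemma eq_modProfile (h : IsModSol m v₀ ε Tε a V C U) (ha : Differentiable ℝ a)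
    (hapos : ∀ r, 0 < a r) (hA₀ : a (ε * -(v₀ * Tε)) = A₀) :
    ∀ t ∈ Ici (-Tε), C t = modProfile m ε A₀ a (U t) := by
  obtain ⟨-, -, -, -, hC, hU, -, hC₀, hU₀⟩ := h
  have hA₀pos : 0 < A₀ := hA₀ ▸ hapos _
  have hP := modProfile_pos (m := m) (ε := ε) hapos hA₀pos
  have hd : ∀ t ∈ Ici (-Tε),
      HasDerivWithinAt (fun t => C t / modProfile m ε A₀ a (U t)) 0 (Ici (-Tε)) t := by
    intro t ht
    have h := (hC t ht).div ((hasDerivAt_modProfile ha hapos hA₀pos _).comp_hasDerivWithinAt t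
      (hU t ht)) (hP _).ne'
    refine h.congr_deriv ?_
    rw [Function.comp_apply]
    ring
  intro t ht
  have h := eq_of_hasDerivWithinAt_zero_Ici hd t ht
  rw [hC₀, hU₀, modProfile_eq_one hA₀ hA₀pos.ne', div_one, div_eq_one_iff_eq (hP _).ne'] at h
  exact h

lemma sq_sub_eq (h : IsModSol m v₀ ε Tε a V C U) (hm : m ≠ 5) :
    ∀ t ∈ Ici (-Tε), V t ^ 2 - 4 * ((5 - m) / (m + 3)) * C t
      = v₀ ^ 2 - 4 * ((5 - m) / (m + 3)) := by
  obtain ⟨-, -, -, hV, hC, -, hV₀, hC₀, -⟩ := h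
  have hd : ∀ t ∈ Ici (-Tε), HasDerivWithinAt
      (fun t => V t ^ 2 - 4 * ((5 - m) / (m + 3)) * C t) 0 (Ici (-Tε)) t := by
    intro t ht
    refine (((hV t ht).pow 2).sub ((hC t ht).const_mul _)).congr_deriv ?_
    have : (5 - m) ≠ 0 := sub_ne_zero.2 hm.symm
    field_simp
    ring
  intro t ht
  rw [eq_of_hasDerivWithinAt_zero_Ici hd t ht, hV₀, hC₀, mul_one]

lemma eq_modSpeed (h : IsModSol m v₀ ε Tε a V C U) (ha : Differentiable ℝ a)
    (hapos : ∀ r, 0 < a r) (hm3 : -3 < m) (hm5 : m < 5) (hv₀ : 0 < v₀)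
    (hA₀ : a (ε * -(v₀ * Tε)) = A₀) (hc₀ : c₀ = 1 - v₀ ^ 2 / (4 * ((5 - m) / (m + 3))))
    (hrad : ∀ u, c₀ < modProfile m ε A₀ a u) :
    ∀ t ∈ Ici (-Tε), V t = modSpeed m ε A₀ c₀ a (U t) := by
  have hc : 4 * ((5 - m) / (m + 3)) * c₀ = 4 * ((5 - m) / (m + 3)) - v₀ ^ 2 := by
    rw [hc₀, mul_sub, mul_one, mul_div_cancel₀ _ (by linarith [five_sub_div_add_three_pos hm3 hm5])]
  have hsq : ∀ t ∈ Ici (-Tε),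
      V t ^ 2 = 4 * ((5 - m) / (m + 3)) * (modProfile m ε A₀ a (U t) - c₀) := fun t ht => by
    linear_combination h.sq_sub_eq hm5.ne t ht + hc +
      4 * ((5 - m) / (m + 3)) * h.eq_modProfile ha hapos hA₀ t ht
  obtain ⟨hV, -, -, -, -, -, hV₀, -, -⟩ := h
  have hVpos : ∀ t ∈ Ici (-Tε), 0 < V t :=
    pos_of_ne_zero_of_continuousOn_Ici hV.continuousOn (hV₀ ▸ hv₀) fun t ht hVt => by
      have := modSpeed_radicand_pos hm3 hm5 hrad (U t)
      rw [← hsq t ht, hVt] at this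
      simp at this
  intro t ht
  rw [modSpeed, ← hsq t ht, sqrt_sq (hVpos t ht).le]

theorem eqOn (h₁ : IsModSol m v₀ ε Tε a V₁ C₁ U₁) (h₂ : IsModSol m v₀ ε Tε a V₂ C₂ U₂)
    (ha : ContDiff ℝ 1 a) (hapos : ∀ r, 0 < a r) (hm3 : -3 < m) (hm5 : m < 5) (hv₀ : 0 < v₀)
    (hA₀ : a (ε * -(v₀ * Tε)) = A₀) (hc₀ : c₀ = 1 - v₀ ^ 2 / (4 * ((5 - m) / (m + 3))))
    (hrad : ∀ u, c₀ < modProfile m ε A₀ a u) :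
    EqOn V₁ V₂ (Ici (-Tε)) ∧ EqOn C₁ C₂ (Ici (-Tε)) ∧ EqOn U₁ U₂ (Ici (-Tε)) := by
  have hd := ha.differentiable one_ne_zero
  have hA₀pos : 0 < A₀ := hA₀ ▸ hapos _
  have hV₁ := h₁.eq_modSpeed hd hapos hm3 hm5 hv₀ hA₀ hc₀ hrad
  have hV₂ := h₂.eq_modSpeed hd hapos hm3 hm5 hv₀ hA₀ hc₀ hrad
  have hC₁ := h₁.eq_modProfile hd hapos hA₀
  have hC₂ := h₂.eq_modProfile hd hapos hA₀
  obtain ⟨-, -, -, -, -, hU₁', -, -, hU₁₀⟩ := h₁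
  obtain ⟨-, -, -, -, -, hU₂', -, -, hU₂₀⟩ := h₂
  have hU : EqOn U₁ U₂ (Ici (-Tε)) :=
    eqOn_Ici_of_autonomous (contDiff_modSpeed ha hapos hA₀pos hm3 hm5 hrad).continuous
      (modSpeed_pos hm3 hm5 hrad) (fun t ht => hV₁ t ht ▸ hU₁' t ht)
      (fun t ht => hV₂ t ht ▸ hU₂' t ht) (hU₁₀.trans hU₂₀.symm)
  refine ⟨fun t ht => ?_, fun t ht => ?_, hU⟩
  · rw [hV₁ t ht, hV₂ t ht, hU ht]
  · rw [hC₁ t ht, hC₂ t ht, hU ht]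

end IsModSol

end Modulation

theorem stmt13_general (m v₀ ε a₀ : ℝ) (hm2 : 2 ≤ m) (hm5 : m < 5) (hv₀ : 0 < v₀) (hε : 0 < ε)
    (ha₀ : 0 < a₀)
    (a : ℝ → ℝ) (ha : ContDiff ℝ 1 a)
    (haLB : ∀ r, a₀ < a r) (haUB : ∀ r, a r < 1)
    (halim0 : Tendsto a atTop (nhds a₀))
    (Tε lam0 A₀ c₀ cInf : ℝ)
    (hlam0 : lam0 = (5 - m) / (m + 3))
    (hA₀ : A₀ = a (-(ε * v₀ * Tε))) (hc₀ : c₀ = 1 - v₀ ^ 2 / (4 * lam0))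
    (hcInf : cInf = (a₀ / A₀) ^ ((4:ℝ) / (5 - m)))
    (hrefract : c₀ < cInf) :
    ∃ V C U : ℝ → ℝ,
      IsModSol m v₀ ε Tε a V C U ∧
      (∀ V' C' U' : ℝ → ℝ, IsModSol m v₀ ε Tε a V' C' U' →
        EqOn V V' (Ici (-Tε)) ∧ EqOn C C' (Ici (-Tε)) ∧ EqOn U U' (Ici (-Tε))) ∧
      (∀ t ∈ Ici (-Tε), 0 < V t) ∧
      Tendsto U atTop atTop ∧
      Tendsto C atTop (nhds cInf) ∧
      Tendsto V atTop (nhds (Real.sqrt (4 * lam0 * (cInf - c₀)))) ∧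
      0 < Real.sqrt (4 * lam0 * (cInf - c₀)) := by
  subst hlam0 hcInf
  have hm3 : -3 < m := by linarith
  have hapos : ∀ r, 0 < a r := fun r => ha₀.trans (haLB r)
  have hA₀pos : 0 < A₀ := hA₀ ▸ hapos _
  have hA₀' : a (ε * -(v₀ * Tε)) = A₀ := by rw [hA₀, mul_neg, ← mul_assoc]
  have hrad : ∀ u, c₀ < modProfile m ε A₀ a u :=
    fun u => hrefract.trans (lt_modProfile ha₀.le haLB hA₀pos hm5 u)
  obtain ⟨U, hU₀, hU, hUtop⟩ := exists_hasDerivAt_autonomous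
    (contDiff_modSpeed ha hapos hA₀pos hm3 hm5 hrad).continuous (modSpeed_pos hm3 hm5 hrad)
    (modSpeed_le hapos haUB hA₀pos hm3 hm5) (-Tε) (-(v₀ * Tε))
  have hsol := isModSol_of_hasDerivAt ha hapos hm3 hm5 hv₀ hA₀' hc₀ hrad hU hU₀
  exact ⟨_, _, U, hsol, fun _ _ _ h => hsol.eqOn h ha hapos hm3 hm5 hv₀ hA₀' hc₀ hrad,
    fun t _ => modSpeed_pos hm3 hm5 hrad _, hUtop,
    (tendsto_modProfile_atTop halim0 hε hm5).comp hUtop,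
    (tendsto_modSpeed_atTop halim0 hε hm5).comp hUtop,
    sqrt_pos.2 (mul_pos (by linarith [five_sub_div_add_three_pos hm3 hm5]) (sub_pos.2 hrefract))⟩

theorem stmt13 (m v₀ ε a₀ : ℝ) (hm2 : 2 ≤ m) (hm5 : m < 5) (hv₀ : 0 < v₀) (hε : 0 < ε)
    (ha₀ : 0 < a₀) (ha₀1 : a₀ < 1)
    (a : ℝ → ℝ) (ha : ContDiff ℝ 1 a)
    (haLB : ∀ r, a₀ < a r) (haUB : ∀ r, a r < 1) (ha' : ∀ r, deriv a r < 0)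
    (halim1 : Tendsto a atBot (nhds 1)) (halim0 : Tendsto a atTop (nhds a₀))
    (hdecay : ∃ K > (0:ℝ), ∃ μ > (0:ℝ), ∀ r, |deriv a r| ≤ K * Real.exp (-μ * |r|))
    (Tε lam0 A₀ c₀ cInf : ℝ)
    (hTε : Tε = ε ^ (-(1:ℝ) - 1/100) / v₀) (hlam0 : lam0 = (5 - m) / (m + 3))
    (hA₀ : A₀ = a (-(ε * v₀ * Tε))) (hc₀ : c₀ = 1 - v₀ ^ 2 / (4 * lam0))
    (hcInf : cInf = (a₀ / A₀) ^ ((4:ℝ) / (5 - m)))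
    (hrefract : c₀ < cInf) :
    ∃ V C U : ℝ → ℝ,
      IsModSol m v₀ ε Tε a V C U ∧
      (∀ V' C' U' : ℝ → ℝ, IsModSol m v₀ ε Tε a V' C' U' →
        EqOn V V' (Ici (-Tε)) ∧ EqOn C C' (Ici (-Tε)) ∧ EqOn U U' (Ici (-Tε))) ∧
      (∀ t ∈ Ici (-Tε), 0 < V t) ∧
      Tendsto U atTop atTop ∧
      Tendsto C atTop (nhds cInf) ∧
      Tendsto V atTop (nhds (Real.sqrt (4 * lam0 * (cInf - c₀)))) ∧
      0 < Real.sqrt (4 * lam0 * (cInf - c₀)) :=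
  stmt13_general m v₀ ε a₀ hm2 hm5 hv₀ hε ha₀ a ha haLB haUB halim0 Tε lam0 A₀ c₀ cInf hlam0 hA₀ hc₀
    hcInf hrefract
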